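/- Let d and n be natural numbers. In the formal power series ring ℚ[[x,y]], the series (1 − x − y)^{d+1} is invertible, and the coefficient of x^n y^n in its inverse (1 − x − y)^{−(d+1)} equals C(2n+d, n)·C(n+d, d). Equivalently, the diagonal of the rational power series 1/(1−x−y)^{d+1} is Σ_{n≥0} C(2n+d,n)·C(n+d,d)·t^n. -/

import Mathlib

/-!
Expanding `(1 - t)^{-(d+1)} = ∑ₖ C(d + k, d) tᵏ` and substituting `t = x + y` (legitimate since
`x + y` has no constant term) gives the inverse of `(1 - x - y)^{d+1}`; the coefficient of `xⁱ yʲ`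
in `(x + y)^{i+j}` is `C(i + j, i)`. At `i = j = n` the trinomial coefficient
`C(2n + d, d) C(2n, n) = C(2n + d, n) C(n + d, d)` gives the claimed form.
-/

open MvPowerSeries

theorem Nat.add_add_choose_mul_add_choose (a b c : ℕ) :
    (a + b + c).choose c * (a + b).choose a = (a + b + c).choose a * (b + c).choose c := by
  rw [← Nat.choose_symm_add (a := a + b), Nat.choose_mul (Nat.le_add_right a b), Nat.add_assoc,
    Nat.add_sub_cancel_left, Nat.add_sub_cancel_left, Nat.choose_symm_add (a := b)]

theorem MvPowerSeries.inv_eq_of_mul_eq_one {σ k : Type*} [Field k] {φ ψ : MvPowerSeries σ k}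
    (h : φ * ψ = 1) : φ⁻¹ = ψ :=
  (MvPowerSeries.inv_eq_iff_mul_eq_one
    (isUnit_iff_constantCoeff.mp (IsUnit.of_mul_eq_one ψ h)).ne_zero).mpr
    (by rw [mul_comm, h])

section

variable {R : Type*} [CommRing R]

theorem hasSubst_X_zero_add_X_one :
    PowerSeries.HasSubst (X 0 + X 1 : MvPowerSeries (Fin 2) R) :=
  PowerSeries.HasSubst.of_constantCoeff_zero (by simp)

theorem subst_X_zero_add_X_one_one_sub_X :
    PowerSeries.subst (X 0 + X 1 : MvPowerSeries (Fin 2) R) (1 - PowerSeries.X : PowerSeries R) =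
      1 - X 0 - X 1 := by
  rw [← PowerSeries.coe_substAlgHom hasSubst_X_zero_add_X_one, map_sub, map_one,
    PowerSeries.coe_substAlgHom, PowerSeries.subst_X hasSubst_X_zero_add_X_one,
    sub_add_eq_sub_sub]

theorem one_sub_X_zero_sub_X_one_pow_mul_subst_invOneSubPow (d : ℕ) :
    (1 - X 0 - X 1 : MvPowerSeries (Fin 2) R) ^ d *
      PowerSeries.subst (X 0 + X 1 : MvPowerSeries (Fin 2) R)
        (PowerSeries.invOneSubPow R d).val = 1 := by
  have h := congrArg (PowerSeries.substAlgHom (hasSubst_X_zero_add_X_one (R := R)))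
    (PowerSeries.invOneSubPow R d).inv_val
  rwa [map_mul, map_one, PowerSeries.invOneSubPow_inv_eq_one_sub_pow, map_pow,
    PowerSeries.coe_substAlgHom, subst_X_zero_add_X_one_one_sub_X] at h

theorem coeff_subst_invOneSubPow_succ (d : ℕ) (e : Fin 2 →₀ ℕ) :
    coeff e (PowerSeries.subst (X 0 + X 1 : MvPowerSeries (Fin 2) R)
      (PowerSeries.invOneSubPow R (d + 1)).val) =
      (e 0 + e 1).choose (e 0) * (d + (e 0 + e 1)).choose d := by
  rw [PowerSeries.coeff_subst_X_zero_add_X_one,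
    PowerSeries.invOneSubPow_val_succ_eq_mk_add_choose, PowerSeries.coeff_mk]

end

theorem coeff_inv_one_sub_X_zero_sub_X_one_pow {k : Type*} [Field k] (d : ℕ)
    (e : Fin 2 →₀ ℕ) :
    coeff e (((1 - X 0 - X 1 : MvPowerSeries (Fin 2) k) ^ (d + 1))⁻¹) =
      (e 0 + e 1).choose (e 0) * (d + (e 0 + e 1)).choose d := by
  rw [MvPowerSeries.inv_eq_of_mul_eq_one
    (one_sub_X_zero_sub_X_one_pow_mul_subst_invOneSubPow _), coeff_subst_invOneSubPow_succ]

theorem diag_inv_one_sub_x_sub_y_pow (d n : ℕ) :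
    IsUnit ((1 - MvPowerSeries.X 0 - MvPowerSeries.X 1 : MvPowerSeries (Fin 2) ℚ) ^ (d + 1)) ∧
    MvPowerSeries.coeff (Finsupp.single 0 n + Finsupp.single 1 n)
      (((1 - MvPowerSeries.X 0 - MvPowerSeries.X 1 : MvPowerSeries (Fin 2) ℚ) ^ (d + 1))⁻¹) =
      Nat.choose (2 * n + d) n * Nat.choose (n + d) d := by
  refine ⟨IsUnit.of_mul_eq_one _ (one_sub_X_zero_sub_X_one_pow_mul_subst_invOneSubPow _), ?_⟩
  have h0 : (Finsupp.single 0 n + Finsupp.single 1 n : Fin 2 →₀ ℕ) 0 = n := by simp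
  have h1 : (Finsupp.single 0 n + Finsupp.single 1 n : Fin 2 →₀ ℕ) 1 = n := by simp
  rw [coeff_inv_one_sub_X_zero_sub_X_one_pow, h0, h1, two_mul, add_comm d, mul_comm]
  exact_mod_cast Nat.add_add_choose_mul_add_choose n n d
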